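/- arXiv:1901.04583 — 3 statements merged into one kernel-verified Lean document; each statement's English description precedes it below -/
import Mathlib

section
/- The area A_v = (v_0^4 + 3(v_m^2 + 2 a_m((t_f - t_full)v_m + x_0))^2)/(24 a_m^2 v_0) + C (where C does not depend on v_0) is a decreasing function of v_0 on (0, v_m], provided (t_f - t_full)v_m + v_m^2/a_m ≤ |x_0|. Consequently A_v is minimized over v_0 ∈ (0, v_m] at v_0 = v_m. -/
/-!
Writing `K = v_m² + 2 a_m ((t_f - t_full) v_m + x_0)`, the area is `(v⁴ + 3K²) / (24 a_m² v) + C`,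
whose derivative `(v⁴ - K²) / (8 a_m² v²)` is nonpositive as long as `v⁴ ≤ K²`. The
no-overcrowding condition says exactly that `K ≤ -v_m²`, so `v⁴ ≤ v_m⁴ ≤ K²` on `(0, v_m]`.
-/

open Set

section QuarticOverLinear

variable {c k : ℝ}

theorem hasDerivAt_quartic_add_div_mul (hk : k ≠ 0) {v : ℝ} (hv : v ≠ 0) :
    HasDerivAt (fun v => (v ^ 4 + c) / (k * v)) ((3 * v ^ 4 - c) / (k * v ^ 2)) v := by
  have hnum : HasDerivAt (fun v : ℝ => v ^ 4 + c) (4 * v ^ 3) v := by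
    simpa using (hasDerivAt_pow 4 v).add_const c
  have hden : HasDerivAt (fun v : ℝ => k * v) k v := by
    simpa using (hasDerivAt_id v).const_mul k
  refine (hnum.div hden (mul_ne_zero hk hv)).congr_deriv ?_
  field_simp
  ring

theorem deriv_quartic_add_div_mul_nonpos (hk : 0 < k) {v w : ℝ} (hv : v ∈ Ioc 0 w)
    (hwc : 3 * w ^ 4 ≤ c) : deriv (fun v => (v ^ 4 + c) / (k * v)) v ≤ 0 := by
  have hvw : v ^ 4 ≤ w ^ 4 := pow_le_pow_left₀ hv.1.le hv.2 4
  rw [(hasDerivAt_quartic_add_div_mul hk.ne' hv.1.ne').deriv]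
  exact div_nonpos_of_nonpos_of_nonneg (by linarith) (by positivity)

theorem antitoneOn_quartic_add_div_mul (hk : 0 < k) {w : ℝ} (hwc : 3 * w ^ 4 ≤ c) :
    AntitoneOn (fun v => (v ^ 4 + c) / (k * v)) (Ioc 0 w) := by
  have hderiv : ∀ v ∈ Ioc 0 w, HasDerivAt (fun v => (v ^ 4 + c) / (k * v))
      ((3 * v ^ 4 - c) / (k * v ^ 2)) v := fun v hv =>
    hasDerivAt_quartic_add_div_mul hk.ne' hv.1.ne'
  exact antitoneOn_of_deriv_nonpos (convex_Ioc 0 w)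
    (fun v hv => (hderiv v hv).continuousAt.continuousWithinAt)
    (fun v hv => (hderiv v (interior_subset hv)).differentiableAt.differentiableWithinAt)
    fun v hv => deriv_quartic_add_div_mul_nonpos hk (interior_subset hv) hwc

end QuarticOverLinear

theorem pow_four_le_sq_of_no_overcrowding {a v s x : ℝ} (ha : 0 < a) (hx : x < 0)
    (h : s * v + 2 * (v ^ 2 / (2 * a)) ≤ |x|) : v ^ 4 ≤ (v ^ 2 + 2 * a * (s * v + x)) ^ 2 := by
  have htwo : 2 * (v ^ 2 / (2 * a)) = v ^ 2 / a := by field_simp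
  rw [abs_of_neg hx, htwo] at h
  have hK : v ^ 2 + 2 * a * (s * v + x) ≤ -v ^ 2 := by
    have := (div_le_iff₀ ha).mp (by linarith : v ^ 2 / a ≤ -x - s * v)
    nlinarith
  nlinarith [sq_nonneg v]

theorem area_decreasing_in_initial_speed_general
    (a_m v_m x_0 t_full t_f C : ℝ) (f : ℝ → ℝ)
    (ha : 0 < a_m) (hx0 : x_0 < 0)
    (hnoc : (t_f - t_full) * v_m + 2 * (v_m ^ 2 / (2 * a_m)) ≤ |x_0|)
    (hf : ∀ v, f v =
      (v ^ 4 + 3 * (v_m ^ 2 + 2 * a_m * ((t_f - t_full) * v_m + x_0)) ^ 2) /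
        (24 * a_m ^ 2 * v) + C) :
    (∀ v_0 ∈ Set.Ioc (0 : ℝ) v_m, deriv f v_0 ≤ 0) ∧
    (∀ v_0 ∈ Set.Ioc (0 : ℝ) v_m, f v_m ≤ f v_0) := by
  set K := v_m ^ 2 + 2 * a_m * ((t_f - t_full) * v_m + x_0)
  have hk : 0 < 24 * a_m ^ 2 := by positivity
  have hK : 3 * v_m ^ 4 ≤ 3 * K ^ 2 := by
    linarith [pow_four_le_sq_of_no_overcrowding ha hx0 hnoc]
  have hf' : f = fun v => (v ^ 4 + 3 * K ^ 2) / (24 * a_m ^ 2 * v) + C := funext hf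
  refine ⟨fun v_0 hv_0 => ?_, fun v_0 hv_0 => ?_⟩
  · rw [hf', deriv_add_const]
    exact deriv_quartic_add_div_mul_nonpos hk hv_0 hK
  · have hv_m : v_m ∈ Ioc 0 v_m := right_mem_Ioc.mpr (hv_0.1.trans_le hv_0.2)
    have := antitoneOn_quartic_add_div_mul hk hK hv_0 hv_m hv_0.2
    rw [hf v_m, hf v_0]
    linarith

/-- The area `A_v`, as a function of the initial speed `v_0`, is decreasing on
`(0, v_m]` under the no-overcrowding condition, hence minimized at `v_0 = v_m`. -/
theorem area_decreasing_in_initial_speed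
    (a_m v_m x_0 t_full t_f C : ℝ) (f : ℝ → ℝ)
    (ha : 0 < a_m) (hv : 0 < v_m) (hx0 : x_0 < 0) (ht : t_full ≤ t_f)
    (hnoc : (t_f - t_full) * v_m + 2 * (v_m ^ 2 / (2 * a_m)) ≤ |x_0|)
    (hf : ∀ v, f v =
      (v ^ 4 + 3 * (v_m ^ 2 + 2 * a_m * ((t_f - t_full) * v_m + x_0)) ^ 2) /
        (24 * a_m ^ 2 * v) + C) :
    (∀ v_0 ∈ Set.Ioc (0 : ℝ) v_m, deriv f v_0 ≤ 0) ∧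
    (∀ v_0 ∈ Set.Ioc (0 : ℝ) v_m, f v_m ≤ f v_0) :=
  area_decreasing_in_initial_speed_general a_m v_m x_0 t_full t_f C f ha hx0 hnoc hf
end

section
/- In the no-full-stop case, if the vehicle enters at speed v_0 = v_m, decelerates at rate a_m to speed v_1, then accelerates at rate a_m back to v_m reaching it at time t_full, and the total distance traveled over [0, t_f] is |x_0| with final constant-speed segment of length t_f - t_full, then v_1 = v_m - sqrt(a_m (t_f v_m - |x_0|)). Moreover the deceleration time equals t̃ = sqrt((t_f v_m - |x_0|)/a_m), and t_acc = t_full - t̃. -/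
/-- No-full-stop case: if the vehicle enters at speed `v_m`, decelerates at rate
`a_m` to `v_1`, accelerates back to `v_m` reaching it at `t_full`, and covers total
distance `|x_0|`, then `v_1 = v_m - sqrt(a_m (t_f v_m - |x_0|))`, the deceleration
time equals `sqrt((t_f v_m - |x_0|)/a_m)`, and `t_acc = t_full - sqrt((t_f v_m - |x_0|)/a_m)`. -/
theorem no_stop_minimum_speed
    (a_m v_m v_1 x_0 t_dec t_acc t_full t_f : ℝ)
    (ha : 0 < a_m) (hv : 0 < v_m) (hx0 : x_0 < 0)
    (hlt : |x_0| < t_f * v_m) (hns : t_f * v_m - |x_0| ≤ v_m ^ 2 / a_m)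
    (hv1 : 0 ≤ v_1) (hv1m : v_1 ≤ v_m)
    (hdec0 : 0 ≤ t_dec)
    (h1 : t_acc - t_dec = (v_m - v_1) / a_m)
    (h2 : t_full - t_acc = (v_m - v_1) / a_m)
    (h3 : t_full ≤ t_f)
    (hdist : v_m * t_dec + (v_m + v_1) / 2 * (t_acc - t_dec)
      + (v_1 + v_m) / 2 * (t_full - t_acc) + (t_f - t_full) * v_m = |x_0|) :
    v_1 = v_m - Real.sqrt (a_m * (t_f * v_m - |x_0|)) ∧
    t_acc - t_dec = Real.sqrt ((t_f * v_m - |x_0|) / a_m) ∧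
    t_acc = t_full - Real.sqrt ((t_f * v_m - |x_0|) / a_m) := by
  have ha' : a_m ≠ 0 := ne_of_gt ha
  have key : (v_m - v_1) ^ 2 = a_m * (t_f * v_m - |x_0|) := by
    have h12 : a_m * (t_full - t_dec) = 2 * (v_m - v_1) := by
      have : t_full - t_dec = (v_m - v_1) / a_m + (v_m - v_1) / a_m := by linarith
      rw [this]; field_simp; ring
    rw [h1, h2] at hdist
    field_simp at hdist
    nlinarith [hdist, h12]
  have hD : 0 ≤ t_f * v_m - |x_0| := by linarith
  have hs1 : Real.sqrt (a_m * (t_f * v_m - |x_0|)) = v_m - v_1 := by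
    rw [← key]
    exact Real.sqrt_sq (by linarith)
  have hs2 : Real.sqrt ((t_f * v_m - |x_0|) / a_m) = (v_m - v_1) / a_m := by
    have : (t_f * v_m - |x_0|) / a_m = ((v_m - v_1) / a_m) ^ 2 := by
      field_simp
      nlinarith [key]
    rw [this]
    exact Real.sqrt_sq (div_nonneg (by linarith) ha.le)
  refine ⟨by linarith, by rw [hs2]; exact h1, by rw [hs2]; linarith⟩
end

section
/- For the no-stop closed-form trajectory with t̃ = sqrt((t_f v_m - |x_0|)/a_m), t_acc = t_full - t̃, t_dec = t_acc - t̃, and acceleration 0, -a_m, a_m, 0 on [0,t_dec), [t_dec,t_acc), [t_acc,t_full), [t_full,t_f], starting at x(0) = x_0 < 0 with speed v_m and t_full = t_f: the minimum speed attained is v_m - a_m t̃ = v_m - sqrt(a_m(t_f v_m - |x_0|)), and the trajectory ends at x(t_f) = 0 with speed v_m. The minimum speed is nonnegative if and only if t_f v_m - |x_0| ≤ v_m^2/a_m, i.e., iff L = v_m(t_f - v_m/a_m) ≤ |x_0|. -/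
/-! On the three phases the speed is `v_m - a_m · Λ(t)`, where `Λ` is the triangular pulse of
height and half-width `t̃` centred at `t_acc`. The pulse has area `t̃²`, so the trajectory falls
`a_m t̃² = t_f v_m - |x_0|` behind free flow over `[0, t_f]`, which is exactly what makes it end at
`0`; its lowest speed is at the apex, `v_m - a_m t̃`. -/

open intervalIntegral

noncomputable def trianglePulse (c r t : ℝ) : ℝ := max 0 (r - |t - c|)

namespace trianglePulse

variable {c r : ℝ}

theorem le_height (hr : 0 ≤ r) (t : ℝ) : trianglePulse c r t ≤ r :=
  max_le hr (sub_le_self _ (abs_nonneg _))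

theorem apply_center (hr : 0 ≤ r) : trianglePulse c r c = r := by
  simp [trianglePulse, hr]

theorem eq_zero_of_le_abs {t : ℝ} (h : r ≤ |t - c|) : trianglePulse c r t = 0 :=
  max_eq_left (sub_nonpos.2 h)

theorem continuous (c r : ℝ) : Continuous (trianglePulse c r) := by
  unfold trianglePulse; fun_prop

theorem integral_eq_sq (hr : 0 ≤ r) {a b : ℝ} (ha : a ≤ c - r) (hb : c + r ≤ b) :
    ∫ t in a..b, trianglePulse c r t = r ^ 2 := by
  have hi : ∀ p q : ℝ, IntervalIntegrable (trianglePulse c r) MeasureTheory.volume p q :=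
    fun p q => (continuous c r).intervalIntegrable p q
  have left : ∫ t in a..c - r, trianglePulse c r t = 0 := by
    refine integral_zero_ae (Filter.Eventually.of_forall fun t ht => eq_zero_of_le_abs ?_)
    rw [Set.uIoc_of_le ha] at ht
    rw [abs_of_nonpos (by linarith [ht.2])]; linarith [ht.2]
  have right : ∫ t in c + r..b, trianglePulse c r t = 0 := by
    refine integral_zero_ae (Filter.Eventually.of_forall fun t ht => eq_zero_of_le_abs ?_)
    rw [Set.uIoc_of_le hb] at ht
    rw [abs_of_nonneg (by linarith [ht.1])]; linarith [ht.1]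
  have rising : ∫ t in c - r..c, trianglePulse c r t = r ^ 2 / 2 := by
    have h : Set.EqOn (trianglePulse c r) (fun t => t - (c - r)) (Set.uIcc (c - r) c) := by
      intro t ht
      rw [Set.uIcc_of_le (by linarith)] at ht
      rw [trianglePulse, abs_of_nonpos (by linarith [ht.2]), max_eq_right (by linarith [ht.1])]
      ring
    rw [integral_congr h, integral_comp_sub_right (fun t => t), integral_id]
    ring
  have falling : ∫ t in c..c + r, trianglePulse c r t = r ^ 2 / 2 := by
    have h : Set.EqOn (trianglePulse c r) (fun t => r - (t - c)) (Set.uIcc c (c + r)) := by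
      intro t ht
      rw [Set.uIcc_of_le (by linarith)] at ht
      rw [trianglePulse, abs_of_nonneg (by linarith [ht.1]), max_eq_right (by linarith [ht.2])]
    rw [integral_congr h, integral_comp_sub_right (fun t => r - t), integral_sub intervalIntegrable_const
      intervalIntegrable_id, integral_const, integral_id]
    simp only [smul_eq_mul]
    ring
  rw [← integral_add_adjacent_intervals (hi a (c - r)) (hi (c - r) b),
    ← integral_add_adjacent_intervals (hi (c - r) c) (hi c b),
    ← integral_add_adjacent_intervals (hi c (c + r)) (hi (c + r) b),
    left, rising, falling, right]
  ring

theorem piecewise_eq (v₀ k : ℝ) (hr : 0 ≤ r) (t : ℝ) :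
    (if t < c - r then v₀
      else if t < c then v₀ - k * (t - (c - r))
      else if t < c + r then (v₀ - k * r) + k * (t - c)
      else v₀) = v₀ - k * trianglePulse c r t := by
  unfold trianglePulse
  split_ifs with h₁ h₂ h₃
  · rw [max_eq_left (by rw [abs_of_neg (by linarith)]; linarith)]; ring
  · rw [max_eq_right (by rw [abs_of_neg (by linarith)]; linarith), abs_of_neg (by linarith)]; ring
  · rw [max_eq_right (by rw [abs_of_nonneg (by linarith)]; linarith), abs_of_nonneg (by linarith)]; ring
  · rw [max_eq_left (by rw [abs_of_nonneg (by linarith)]; linarith)]; ring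

end trianglePulse

theorem Real.mul_sqrt_div_self {a : ℝ} (ha : 0 ≤ a) (x : ℝ) : a * √(x / a) = √(a * x) := by
  rcases ha.eq_or_lt with rfl | ha
  · simp
  rw [← Real.sqrt_sq ha.le, ← Real.sqrt_mul (sq_nonneg a), Real.sqrt_sq ha.le]
  congr 1
  field_simp

/-- The no-stop closed-form trajectory with `t̃ = sqrt((t_f v_m - |x_0|)/a_m)`:
its minimum speed is `v_m - a_m t̃ = v_m - sqrt(a_m (t_f v_m - |x_0|))`, it ends
at position `0` with speed `v_m`, and the minimum speed is nonnegative iff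
`t_f v_m - |x_0| ≤ v_m²/a_m`, i.e. iff `L = v_m (t_f - v_m/a_m) ≤ |x_0|`. -/
theorem no_stop_trajectory_valid
    (a_m v_m x_0 ttil t_dec t_acc t_full t_f : ℝ) (x v : ℝ → ℝ)
    (ha : 0 < a_m) (hv : 0 < v_m) (hx0 : x_0 < 0)
    (hfree : 0 ≤ t_f * v_m - |x_0|)
    (httil : ttil = Real.sqrt ((t_f * v_m - |x_0|) / a_m))
    (hfull : t_full = t_f)
    (hacc : t_acc = t_full - ttil) (hdec : t_dec = t_acc - ttil)
    (hdec0 : 0 ≤ t_dec)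
    (hvdef : ∀ t, v t =
      if t < t_dec then v_m
      else if t < t_acc then v_m - a_m * (t - t_dec)
      else if t < t_full then (v_m - a_m * ttil) + a_m * (t - t_acc)
      else v_m)
    (hxdef : ∀ t, x t = x_0 + ∫ s in (0 : ℝ)..t, v s) :
    v t_acc = v_m - a_m * ttil ∧
    v_m - a_m * ttil = v_m - Real.sqrt (a_m * (t_f * v_m - |x_0|)) ∧
    (∀ t ∈ Set.Icc 0 t_f, v_m - a_m * ttil ≤ v t) ∧
    x t_f = 0 ∧ v t_f = v_m ∧
    (0 ≤ v_m - a_m * ttil ↔ t_f * v_m - |x_0| ≤ v_m ^ 2 / a_m) ∧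
    (t_f * v_m - |x_0| ≤ v_m ^ 2 / a_m ↔ v_m * (t_f - v_m / a_m) ≤ |x_0|) := by
  have httil0 : 0 ≤ ttil := httil ▸ Real.sqrt_nonneg _
  have hdip : a_m * ttil ^ 2 = t_f * v_m - |x_0| := by
    rw [httil, Real.sq_sqrt (div_nonneg hfree ha.le)]; field_simp
  have hmin : a_m * ttil = √(a_m * (t_f * v_m - |x_0|)) := by
    rw [httil, Real.mul_sqrt_div_self ha.le]
  have hv_pulse : ∀ t, v t = v_m - a_m * trianglePulse t_acc ttil t := fun t => by
    rw [hvdef, hdec, show t_full = t_acc + ttil by linarith]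
    exact trianglePulse.piecewise_eq v_m a_m httil0 t
  have hxf : x t_f = 0 := by
    rw [hxdef, integral_congr fun t _ => hv_pulse t,
      integral_sub intervalIntegrable_const
        ((trianglePulse.continuous _ _).intervalIntegrable _ _ |>.const_mul a_m),
      integral_const_mul, trianglePulse.integral_eq_sq httil0 (by linarith) (by linarith),
      integral_const, smul_eq_mul, hdip, abs_of_neg hx0]
    ring
  refine ⟨?_, by rw [hmin], fun t _ => ?_, hxf, ?_, ?_, ?_⟩
  · rw [hv_pulse, trianglePulse.apply_center httil0]
  · rw [hv_pulse]
    exact sub_le_sub_left (mul_le_mul_of_nonneg_left (trianglePulse.le_height httil0 t) ha.le) _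
  · rw [hv_pulse, trianglePulse.eq_zero_of_le_abs (by rw [abs_of_nonneg] <;> linarith)]
    ring
  · rw [sub_nonneg, hmin, Real.sqrt_le_iff, le_div_iff₀ ha, mul_comm]
    exact and_iff_right hv.le
  · have hL : v_m * (t_f - v_m / a_m) = t_f * v_m - v_m ^ 2 / a_m := by ring
    constructor <;> intro h <;> linarith
end
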